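/- If g₁, g₂ ∈ G₂ satisfy σ^i(g₁) ≠ g₂ for every i ∈ ℤ, then there exists a ∈ 𝒢 such that Σ_{i=0}^{m_a−1} a(σ^i(g₁)) ≠ Σ_{i=0}^{m_a−1} a(σ^i(g₂)), where the circle values a(·) are regarded as complex numbers and the sums are taken in ℂ. -/

import Mathlib

/-- `G₂ := ⊕_{i ∈ ℤ} ℤ/2ℤ`, realized as finitely supported functions `ℤ →₀ ZMod 2`. -/
abbrev Gtwo : Type := ℤ →₀ ZMod 2

/-- `G₂` carries the discrete topology. -/
instance : TopologicalSpace Gtwo := ⊥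
instance : DiscreteTopology Gtwo := ⟨rfl⟩

/-- The shift automorphism `σ` of `G₂`, `(σ g)(i) = g (i+1)`. -/
def shiftAut : AddAut Gtwo := Finsupp.domCongr (Equiv.subRight (1 : ℤ))

/-- The Pontryagin dual `Ĝ₂` of `G₂`: continuous characters with values in the circle group,
with the compact-open topology. -/
abbrev DualGtwo : Type := PontryaginDual (Multiplicative Gtwo)

/-- `𝒢_m := { a ∈ Ĝ₂ : a ∘ σ^m = a }`. -/
def Gm (m : ℕ) : Set DualGtwo :=
  {a | ∀ g : Gtwo, a (Multiplicative.ofAdd ((m • shiftAut) g)) = a (Multiplicative.ofAdd g)}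

/-- `𝒢 := ⋃_{m ≥ 1} 𝒢_m`. -/
def curlyG : Set DualGtwo := ⋃ m ∈ {m : ℕ | 1 ≤ m}, Gm m

/-! ### Auxiliary lemmas -/

section Aux

lemma shiftAut_apply' (g : Gtwo) (j : ℤ) : shiftAut g j = g (j + 1) := by
  simp [shiftAut]

lemma shiftAut_pow_apply (n : ℕ) (g : Gtwo) (j : ℤ) : ((n • shiftAut) g) j = g (j + n) := by
  induction n generalizing g j with
  | zero => simp
  | succ n ih =>
    rw [succ_nsmul]
    have : ((n • shiftAut) + shiftAut) g = (n • shiftAut) (shiftAut g) := rfl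
    rw [this, ih, shiftAut_apply']
    congr 1; push_cast; ring

lemma shiftAut_zpow_apply (z : ℤ) (g : Gtwo) (j : ℤ) : ((z • shiftAut) g) j = g (j + z) := by
  obtain ⟨n, rfl | rfl⟩ := z.eq_nat_or_neg
  · rw [natCast_zsmul, shiftAut_pow_apply]
  · rw [neg_zsmul, natCast_zsmul]
    have h1 : (n • shiftAut) ((-(n • shiftAut)) g) = g := by
      rw [← AddAut.add_apply, add_neg_cancel]; rfl
    conv_rhs => rw [← h1, shiftAut_pow_apply]
    congr 1; ring

noncomputable def fold (m : ℕ) : Gtwo →+ (ZMod m →₀ ZMod 2) :=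
  Finsupp.mapDomain.addMonoidHom (Int.cast)

lemma fold_apply (m : ℕ) (g : Gtwo) :
    fold m g = Finsupp.mapDomain (Int.cast : ℤ → ZMod m) g := rfl

lemma castInjOn (m : ℕ) (a : ℤ) :
    Set.InjOn (Int.cast : ℤ → ZMod m) {x : ℤ | a ≤ x ∧ x ≤ a + m - 1} := by
  intro x hx y hy hxy
  have h := (ZMod.intCast_eq_intCast_iff _ _ _).1 hxy
  have hd : (m : ℤ) ∣ x - y := Int.ModEq.dvd h.symm
  obtain ⟨k, hk⟩ := hd
  simp only [Set.mem_setOf_eq] at hx hy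
  have hk0 : k = 0 := by nlinarith [hx.1, hx.2, hy.1, hy.2]
  rw [hk0, mul_zero] at hk
  omega

lemma fold_window (m : ℕ) (g : Gtwo) (a : ℤ)
    (hsupp : ∀ j, g j ≠ 0 → a ≤ j ∧ j ≤ a + m - 1) (j : ℤ) (hj : a ≤ j ∧ j ≤ a + m - 1) :
    fold m g ((j : ZMod m)) = g j := by
  rw [fold_apply]
  exact Finsupp.mapDomain_apply' {x : ℤ | a ≤ x ∧ x ≤ a + m - 1} g
    (fun x hx => hsupp x (Finsupp.mem_support_iff.1 hx)) (castInjOn m a) hj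

lemma shift_zpow_eq_mapDomain (z : ℤ) (g : Gtwo) :
    (z • shiftAut) g = Finsupp.mapDomain (fun j => j - z) g := by
  ext j
  have : j = (j + z) - z := by ring
  rw [shiftAut_zpow_apply, this, Finsupp.mapDomain_apply (fun x y hxy => by omega)]
  congr 1
  ring

lemma fold_shift (m : ℕ) (z : ℤ) (g : Gtwo) :
    fold m ((z • shiftAut) g) = Finsupp.mapDomain (fun r => r - (z : ZMod m)) (fold m g) := by
  rw [fold_apply, fold_apply, shift_zpow_eq_mapDomain, ← Finsupp.mapDomain_comp,
    ← Finsupp.mapDomain_comp]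
  congr 1
  funext j
  simp [Function.comp]

lemma fold_shift_congr (m : ℕ) (z z' : ℤ) (hz : (z : ZMod m) = z') (g : Gtwo) :
    fold m ((z • shiftAut) g) = fold m ((z' • shiftAut) g) := by
  rw [fold_shift, fold_shift, hz]

/-! ### Characters -/

def negOne : Circle := ⟨-1, by simp [Submonoid.unitSphere]⟩

@[simp] lemma negOne_coe : (negOne : ℂ) = -1 := rfl

noncomputable def csgn (x : ZMod 2) : Circle := negOne ^ x.val

lemma negOne_sq : negOne ^ 2 = 1 := by ext; simp [pow_two]

lemma negOne_pow_mod (a : ℕ) : negOne ^ a = negOne ^ (a % 2) := by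
  conv_lhs => rw [← Nat.div_add_mod a 2, pow_add, pow_mul, negOne_sq, one_pow, one_mul]

lemma csgn_add (x y : ZMod 2) : csgn (x + y) = csgn x * csgn y := by
  rw [csgn, csgn, csgn, ← pow_add, ZMod.val_add, ← negOne_pow_mod]

noncomputable def phi (m : ℕ) (T : Finset (ZMod m)) : Gtwo →+ ZMod 2 :=
  (∑ r ∈ T, Finsupp.applyAddHom (M := ZMod 2) r).comp (fold m)

lemma phi_apply (m : ℕ) (T : Finset (ZMod m)) (g : Gtwo) :
    phi m T g = ∑ r ∈ T, fold m g r := by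
  simp [phi, AddMonoidHom.finset_sum_apply]

noncomputable def chi (m : ℕ) (T : Finset (ZMod m)) : DualGtwo :=
  { toFun := fun g => csgn (phi m T g.toAdd)
    map_one' := by simp [csgn]
    map_mul' := fun x y => by
      show csgn (phi m T (x.toAdd + y.toAdd)) = _
      rw [map_add, csgn_add]
    continuous_toFun := continuous_of_discreteTopology }

lemma chi_apply (m : ℕ) (T : Finset (ZMod m)) (g : Gtwo) :
    chi m T (Multiplicative.ofAdd g) = csgn (phi m T g) := rfl

lemma chi_coe (m : ℕ) (T : Finset (ZMod m)) (g : Gtwo) :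
    ((chi m T (Multiplicative.ofAdd g) : Circle) : ℂ) =
      ∏ r ∈ T, (-1 : ℂ) ^ (fold m g r).val := by
  rw [chi_apply, phi_apply]
  induction T using Finset.cons_induction with
  | empty => simp [csgn]
  | cons r T hr ih =>
    rw [Finset.sum_cons, Finset.prod_cons, csgn_add, Circle.coe_mul, ih]
    congr 1

/-! ### Orthogonality and counting -/

lemma zmod2_cases : ∀ a : ZMod 2, a = 0 ∨ a = 1 := by decide

lemma sgn_scalar_add (a b : ZMod 2) :
    (-1 : ℂ) ^ ((a + b).val) = (-1 : ℂ) ^ a.val * (-1 : ℂ) ^ b.val := by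
  rcases zmod2_cases a with rfl | rfl <;> rcases zmod2_cases b with rfl | rfl <;>
    norm_num [show ((1 + 1 : ZMod 2)) = 0 from rfl, show ZMod.val (2 : ZMod 2) = 0 from rfl,
      show ((1 : ZMod 2)).val = 1 from rfl]

lemma finsupp2_add_eq_zero {α : Type*} (v w : α →₀ ZMod 2) : v + w = 0 ↔ w = v := by
  constructor
  · intro h
    ext r
    have := DFunLike.congr_fun h r
    simp only [Finsupp.add_apply, Finsupp.coe_zero, Pi.zero_apply] at this
    rcases zmod2_cases (v r) with h1 | h1 <;> rcases zmod2_cases (w r) with h2 | h2 <;>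
      rw [h1, h2] <;> rw [h1, h2] at this <;> first | rfl | simpa using this | exact this.symm
  · rintro rfl
    ext r
    simp only [Finsupp.add_apply, Finsupp.coe_zero, Pi.zero_apply]
    rcases zmod2_cases (w r) with h1 | h1 <;> rw [h1] <;> decide

lemma orth (m : ℕ) [NeZero m] (w : ZMod m →₀ ZMod 2) :
    ∑ T ∈ (Finset.univ : Finset (ZMod m)).powerset, ∏ r ∈ T, (-1 : ℂ) ^ (w r).val
      = if w = 0 then (2 : ℂ) ^ m else 0 := by
  have key := Finset.prod_add (fun r => (-1 : ℂ) ^ (w r).val) (fun _ => (1 : ℂ))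
    (Finset.univ : Finset (ZMod m))
  simp only [Finset.prod_const_one, mul_one] at key
  rw [← key]
  by_cases hw : w = 0
  · subst hw
    rw [if_pos rfl]
    simp [ZMod.card]
    norm_num
  · rw [if_neg hw]
    obtain ⟨r, hr⟩ : ∃ r, w r ≠ 0 := by
      by_contra hc
      push_neg at hc
      exact hw (Finsupp.ext fun r => hc r)
    apply Finset.prod_eq_zero (Finset.mem_univ r)
    rcases zmod2_cases (w r) with h | h
    · exact absurd h hr
    · rw [h, show ((1 : ZMod 2)).val = 1 from rfl]
      norm_num

lemma count_eq (m : ℕ) [NeZero m] (u : ZMod m →₀ ZMod 2) (x : ℕ → ZMod m →₀ ZMod 2) :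
    ∑ T ∈ (Finset.univ : Finset (ZMod m)).powerset,
      (∏ r ∈ T, (-1 : ℂ) ^ (u r).val) *
        (∑ i ∈ Finset.range m, ∏ r ∈ T, (-1 : ℂ) ^ (x i r).val)
    = (2 : ℂ) ^ m * ((Finset.range m).filter (fun i => x i = u)).card := by
  have step1 : ∀ T : Finset (ZMod m), ∀ i,
      (∏ r ∈ T, (-1 : ℂ) ^ (u r).val) * (∏ r ∈ T, (-1 : ℂ) ^ (x i r).val)
        = ∏ r ∈ T, (-1 : ℂ) ^ ((u + x i) r).val := by
    intro T i
    rw [← Finset.prod_mul_distrib]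
    refine Finset.prod_congr rfl fun r _ => ?_
    rw [Finsupp.add_apply, sgn_scalar_add]
  calc ∑ T ∈ (Finset.univ : Finset (ZMod m)).powerset,
      (∏ r ∈ T, (-1 : ℂ) ^ (u r).val) *
        (∑ i ∈ Finset.range m, ∏ r ∈ T, (-1 : ℂ) ^ (x i r).val)
      = ∑ i ∈ Finset.range m, ∑ T ∈ (Finset.univ : Finset (ZMod m)).powerset,
          ∏ r ∈ T, (-1 : ℂ) ^ ((u + x i) r).val := by
        simp_rw [Finset.mul_sum]
        rw [Finset.sum_comm]
        exact Finset.sum_congr rfl fun i _ => Finset.sum_congr rfl fun T _ => step1 T i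
    _ = ∑ i ∈ Finset.range m, if x i = u then (2 : ℂ) ^ m else 0 := by
        refine Finset.sum_congr rfl fun i _ => ?_
        rw [orth, if_congr (finsupp2_add_eq_zero _ _) rfl rfl]
    _ = (2 : ℂ) ^ m * ((Finset.range m).filter (fun i => x i = u)).card := by
        rw [← Finset.sum_filter, Finset.sum_const, nsmul_eq_mul, mul_comm]

/-! ### Unfolding: a fold match gives an honest shift match -/

lemma no_fold_match (g₁ g₂ : Gtwo) (h : ∀ i : ℤ, (i • shiftAut) g₁ ≠ g₂) (N : ℕ)
    (h1 : ∀ j : ℤ, g₁ j ≠ 0 → -(N : ℤ) ≤ j ∧ j ≤ N)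
    (h2 : ∀ j : ℤ, g₂ j ≠ 0 → -(N : ℤ) ≤ j ∧ j ≤ N)
    (i : ℕ) (hi : i < 4 * N + 4)
    (hf : fold (4 * N + 4) (((i : ℤ) • shiftAut) g₂) = fold (4 * N + 4) g₁) : False := by
  set m : ℕ := 4 * N + 4 with hm
  set i' : ℤ := if (i : ℤ) ≤ 2 * N + 2 then (i : ℤ) else (i : ℤ) - m with hi'
  have hi'b : -(2 * (N : ℤ) + 2) < i' ∧ i' ≤ 2 * N + 2 := by
    rw [hi']; split_ifs <;> push_cast <;> omega
  have hii' : ((i : ℤ) : ZMod m) = ((i' : ℤ) : ZMod m) := by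
    rw [hi']; split_ifs with hc
    · rfl
    · simp only [Int.cast_sub, Int.cast_natCast, ZMod.natCast_self, sub_zero]
  have hf' : fold m ((i' • shiftAut) g₂) = fold m g₁ :=
    (fold_shift_congr m i i' hii' g₂).symm.trans hf
  set a : ℤ := if 0 ≤ i' then -(N : ℤ) - i' else -(N : ℤ) with ha
  have hs1 : ∀ j : ℤ, g₁ j ≠ 0 → a ≤ j ∧ j ≤ a + m - 1 := by
    intro j hj
    have := h1 j hj
    rw [ha]; split_ifs <;> push_cast <;> omega
  have hs2 : ∀ j : ℤ, ((i' • shiftAut) g₂) j ≠ 0 → a ≤ j ∧ j ≤ a + m - 1 := by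
    intro j hj
    rw [shiftAut_zpow_apply] at hj
    have := h2 _ hj
    rw [ha]; split_ifs <;> push_cast <;> omega
  have key : (i' • shiftAut) g₂ = g₁ := by
    ext j
    by_cases hjw : a ≤ j ∧ j ≤ a + m - 1
    · rw [← fold_window m _ a hs2 j hjw, ← fold_window m _ a hs1 j hjw, hf']
    · by_contra hne
      rcases ne_or_eq (((i' • shiftAut) g₂) j) 0 with h0 | h0
      · exact hjw (hs2 j h0)
      · rw [h0] at hne
        exact hjw (hs1 j fun hg => hne hg.symm)
  apply h (-i')
  ext j
  rw [shiftAut_zpow_apply]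
  have := DFunLike.congr_fun key (j + -i')
  rw [shiftAut_zpow_apply] at this
  rw [← this]
  congr 1
  ring

/-! ### Periods -/

section Period
variable (a : DualGtwo)

def Per (k : ℕ) : Prop :=
  ∀ g : Gtwo, a (Multiplicative.ofAdd ((k • shiftAut) g)) = a (Multiplicative.ofAdd g)

lemma per_add {k l : ℕ} (hk : Per a k) (hl : Per a l) : Per a (k + l) := by
  intro g
  have : ((k + l) • shiftAut) g = (k • shiftAut) ((l • shiftAut) g) := by
    rw [add_nsmul]; rfl
  rw [this, hk, hl]

lemma per_mul {k : ℕ} (hk : Per a k) (n : ℕ) : Per a (n * k) := by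
  induction n with
  | zero => intro g; simp
  | succ n ih =>
    have : (n + 1) * k = n * k + k := by ring
    rw [this]
    exact per_add a ih hk

lemma per_mod {k l : ℕ} (hk : Per a k) (hl : Per a l) : Per a (l % k) := by
  intro g
  have hq : Per a (l / k * k) := per_mul a hk (l / k)
  set g' : Gtwo := (-((l / k * k) • shiftAut) : AddAut Gtwo) g
  have hg' : ((l / k * k) • shiftAut) g' = g := by
    show (((l / k * k) • shiftAut) + -((l / k * k) • shiftAut)) g = g
    rw [add_neg_cancel]; rfl
  have hsplit : (l • shiftAut) g' = ((l % k) • shiftAut) (((l / k * k) • shiftAut) g') := by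
    show (l • shiftAut) g' = (((l % k) • shiftAut) + ((l / k * k) • shiftAut)) g'
    rw [← add_nsmul]
    congr 2
    exact (Nat.mod_add_div' l k).symm
  calc a (Multiplicative.ofAdd (((l % k) • shiftAut) g))
      = a (Multiplicative.ofAdd (((l % k) • shiftAut) (((l / k * k) • shiftAut) g'))) := by
        rw [hg']
    _ = a (Multiplicative.ofAdd ((l • shiftAut) g')) := by rw [hsplit]
    _ = a (Multiplicative.ofAdd g') := hl g'
    _ = a (Multiplicative.ofAdd (((l / k * k) • shiftAut) g')) := (hq g').symm
    _ = a (Multiplicative.ofAdd g) := by rw [hg']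

end Period

lemma sum_range_mul_per (F : ℕ → ℂ) (p q : ℕ) (hF : ∀ i, F (p + i) = F i) :
    ∑ i ∈ Finset.range (q * p), F i = q * ∑ i ∈ Finset.range p, F i := by
  have haux : ∀ k i, F (k * p + i) = F i := by
    intro k
    induction k with
    | zero => simp
    | succ k ih =>
      intro i
      have : (k + 1) * p + i = p + (k * p + i) := by ring
      rw [this, hF, ih]
  induction q with
  | zero => simp
  | succ q ih =>
    rw [Nat.succ_mul, Finset.sum_range_add, ih]
    push_cast
    rw [Finset.sum_congr rfl fun i _ => haux q i]
    ring

lemma chi_per (m : ℕ) (T : Finset (ZMod m)) : Per (chi m T) m := by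
  intro g
  rw [chi_apply, chi_apply, phi_apply, phi_apply]
  congr 1
  refine Finset.sum_congr rfl fun r _ => ?_
  have : ((m : ℕ) • shiftAut) g = (((m : ℕ) : ℤ) • shiftAut) g := by
    rw [natCast_zsmul]
  rw [this, fold_shift]
  congr 1
  rw [show (((m : ℕ) : ℤ) : ZMod m) = 0 by push_cast; simp]
  conv_rhs => rw [show (fold m g : ZMod m →₀ ZMod 2) = Finsupp.mapDomain id (fold m g) from
    (Finsupp.mapDomain_id).symm]
  congr 1
  funext x
  simp

end Aux

/-- If `σ^i(g₁) ≠ g₂` for every `i ∈ ℤ`, then there is `a ∈ 𝒢` such that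
`Σ_{i=0}^{m_a−1} a(σ^i(g₁)) ≠ Σ_{i=0}^{m_a−1} a(σ^i(g₂))`, where `m_a` is the least `m ≥ 1`
with `a ∘ σ^m = a` and the circle values are summed in `ℂ`. -/
theorem stmt_5 (g₁ g₂ : Gtwo) (h : ∀ i : ℤ, (i • shiftAut) g₁ ≠ g₂) :
    ∃ a ∈ curlyG, ∃ m : ℕ,
      IsLeast {m' : ℕ | 1 ≤ m' ∧ ∀ g : Gtwo,
        a (Multiplicative.ofAdd ((m' • shiftAut) g)) = a (Multiplicative.ofAdd g)} m ∧
      ∑ i ∈ Finset.range m, ((a (Multiplicative.ofAdd ((i • shiftAut) g₁)) : Circle) : ℂ) ≠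
      ∑ i ∈ Finset.range m, ((a (Multiplicative.ofAdd ((i • shiftAut) g₂)) : Circle) : ℂ) := by
  classical
  set N : ℕ := (g₁.support ∪ g₂.support).sup Int.natAbs with hN
  have h1 : ∀ j : ℤ, g₁ j ≠ 0 → -(N : ℤ) ≤ j ∧ j ≤ N := by
    intro j hj
    have hmem : j ∈ g₁.support := Finsupp.mem_support_iff.2 hj
    have : j.natAbs ≤ N := Finset.le_sup (Finset.mem_union_left _ hmem)
    omega
  have h2 : ∀ j : ℤ, g₂ j ≠ 0 → -(N : ℤ) ≤ j ∧ j ≤ N := by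
    intro j hj
    have hmem : j ∈ g₂.support := Finsupp.mem_support_iff.2 hj
    have : j.natAbs ≤ N := Finset.le_sup (Finset.mem_union_right _ hmem)
    omega
  set m : ℕ := 4 * N + 4 with hm
  haveI : NeZero m := ⟨by omega⟩
  -- find a distinguishing character
  obtain ⟨T, hT⟩ : ∃ T : Finset (ZMod m),
      ∑ i ∈ Finset.range m,
        ((chi m T (Multiplicative.ofAdd ((i • shiftAut) g₁)) : Circle) : ℂ) ≠
      ∑ i ∈ Finset.range m,
        ((chi m T (Multiplicative.ofAdd ((i • shiftAut) g₂)) : Circle) : ℂ) := by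
    by_contra hc
    push_neg at hc
    have e1 := count_eq m (fold m g₁) (fun i => fold m ((i • shiftAut) g₁))
    have e2 := count_eq m (fold m g₁) (fun i => fold m ((i • shiftAut) g₂))
    have hLHS : ∑ T ∈ (Finset.univ : Finset (ZMod m)).powerset,
        (∏ r ∈ T, (-1 : ℂ) ^ (fold m g₁ r).val) *
          (∑ i ∈ Finset.range m, ∏ r ∈ T, (-1 : ℂ) ^ (fold m ((i • shiftAut) g₁) r).val)
        = ∑ T ∈ (Finset.univ : Finset (ZMod m)).powerset,
        (∏ r ∈ T, (-1 : ℂ) ^ (fold m g₁ r).val) *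
          (∑ i ∈ Finset.range m, ∏ r ∈ T, (-1 : ℂ) ^ (fold m ((i • shiftAut) g₂) r).val) := by
      refine Finset.sum_congr rfl fun T _ => ?_
      congr 1
      have := hc T
      simp_rw [chi_coe] at this
      exact this
    have hcc : ((Finset.range m).filter (fun i => fold m ((i • shiftAut) g₁) = fold m g₁)).card
        = ((Finset.range m).filter (fun i => fold m ((i • shiftAut) g₂) = fold m g₁)).card := by
      have := (e1.symm.trans hLHS).trans e2
      have h2m : ((2 : ℂ) ^ m) ≠ 0 := pow_ne_zero _ two_ne_zero
      have := mul_left_cancel₀ h2m this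
      exact_mod_cast this
    have hmem0 : (0 : ℕ) ∈ (Finset.range m).filter
        (fun i => fold m ((i • shiftAut) g₁) = fold m g₁) := by
      refine Finset.mem_filter.2 ⟨Finset.mem_range.2 (by omega), ?_⟩
      rw [zero_nsmul]
      rfl
    have hpos : 0 < ((Finset.range m).filter
        (fun i => fold m ((i • shiftAut) g₂) = fold m g₁)).card := by
      rw [← hcc]
      exact Finset.card_pos.2 ⟨0, hmem0⟩
    obtain ⟨i, hi⟩ := Finset.card_pos.1 hpos
    obtain ⟨hir, hif⟩ := Finset.mem_filter.1 hi
    refine no_fold_match g₁ g₂ h N h1 h2 i (Finset.mem_range.1 hir) ?_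
    rw [natCast_zsmul]
    exact hif
  -- minimal period
  set P : Set ℕ := {m' : ℕ | 1 ≤ m' ∧ ∀ g : Gtwo,
    chi m T (Multiplicative.ofAdd ((m' • shiftAut) g))
      = chi m T (Multiplicative.ofAdd g)} with hP
  have hmP : m ∈ P := ⟨by omega, chi_per m T⟩
  have hne : P.Nonempty := ⟨m, hmP⟩
  have hleast : IsLeast P (sInf P) := ⟨Nat.sInf_mem hne, fun b hb => Nat.sInf_le hb⟩
  refine ⟨chi m T, ?_, sInf P, hleast, ?_⟩
  · refine Set.mem_biUnion (show m ∈ {m : ℕ | 1 ≤ m} from by simp; omega) ?_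
    exact chi_per m T
  · -- deduce the sInf P sums differ
    have hPer0 : Per (chi m T) (sInf P) := hleast.1.2
    have hPerm : Per (chi m T) m := chi_per m T
    have hr0 : m % (sInf P) = 0 := by
      by_contra hr
      have h1r : 1 ≤ m % sInf P := Nat.one_le_iff_ne_zero.2 hr
      have hle : sInf P ≤ m % sInf P := hleast.2 ⟨h1r, per_mod (chi m T) hPer0 hPerm⟩
      have : m % sInf P < sInf P :=
        Nat.mod_lt _ (lt_of_lt_of_le Nat.zero_lt_one hleast.1.1)
      omega
    have hqm : (m / sInf P) * sInf P = m := Nat.div_mul_cancel (Nat.dvd_of_mod_eq_zero hr0)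
    have key : ∀ g : Gtwo,
        ∑ i ∈ Finset.range m,
          ((chi m T (Multiplicative.ofAdd ((i • shiftAut) g)) : Circle) : ℂ)
        = (m / sInf P : ℕ) * ∑ i ∈ Finset.range (sInf P),
          ((chi m T (Multiplicative.ofAdd ((i • shiftAut) g)) : Circle) : ℂ) := by
      intro g
      have hper : ∀ i, ((chi m T (Multiplicative.ofAdd (((sInf P + i) • shiftAut) g)) : Circle) : ℂ)
          = ((chi m T (Multiplicative.ofAdd ((i • shiftAut) g)) : Circle) : ℂ) := by
        intro i
        have hsp : ((sInf P + i) • shiftAut) g = (sInf P • shiftAut) ((i • shiftAut) g) := by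
          rw [add_nsmul]; rfl
        rw [hsp, hPer0 ((i • shiftAut) g)]
      have hsum := sum_range_mul_per
        (fun i => ((chi m T (Multiplicative.ofAdd ((i • shiftAut) g)) : Circle) : ℂ))
        (sInf P) (m / sInf P) hper
      rw [hqm] at hsum
      exact hsum
    intro heq
    apply hT
    rw [key g₁, key g₂, heq]
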